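/- Let Φ(x) := (2π)^{−1/2}·∫_{−∞}^x exp(−t²/2) dt denote the standard normal cumulative distribution function, let γ > 0 and ρ > 0, and define p̃_a(θ) := 1 − Φ((θ + 1/2 − γ)/√γ), p̃_1(θ) := 1 − Φ((θ − 1/2 − γ)/√γ), and P_c(θ) := (1 + p̃_1(θ)·ρ)/((1+ρ)·(1 + p̃_a(θ)·ρ)). Then for every θ ∈ ℝ, the derivative of P_c at θ is zero if and only if θ = γ·log( (1 + p̃_1(θ)·ρ)/(1 + p̃_a(θ)·ρ) ) + γ. -/

import Mathlib

open Real MeasureTheory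

/-- The standard normal cumulative distribution function. -/
noncomputable def normCDF (x : ℝ) : ℝ :=
  (2 * π) ^ (-(1 : ℝ) / 2) * ∫ t in Set.Iic x, Real.exp (-t ^ 2 / 2)

/-- Continuity-corrected normal approximation of the base-station active probability. -/
noncomputable def pTildeA (γ θ : ℝ) : ℝ := 1 - normCDF ((θ + 1 / 2 - γ) / Real.sqrt γ)

/-- Continuity-corrected normal approximation of the nearest-connection probability. -/
noncomputable def pTildeOne (γ θ : ℝ) : ℝ := 1 - normCDF ((θ - 1 / 2 - γ) / Real.sqrt γ)

/-!
Writing `φ` for the standard normal density, the quotient rule turns `P_c'(θ) = 0` into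
`φ(x₁) · (1 + p̃_a ρ) = φ(x_a) · (1 + p̃_1 ρ)`, where `x₁, x_a = (θ ∓ 1/2 - γ)/√γ`.
Since `x_a² - x₁² = 2(θ - γ)/γ`, the density ratio is `φ(x_a)/φ(x₁) = exp(-(θ - γ)/γ)`, and
taking logarithms (both factors `1 + p̃ ρ` are positive because `Φ ≤ 1`) gives the equation.
-/

noncomputable def normPDF (x : ℝ) : ℝ := (2 * π) ^ (-(1 : ℝ) / 2) * exp (-x ^ 2 / 2)

lemma normPDF_pos (x : ℝ) : 0 < normPDF x := by
  unfold normPDF; positivity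

lemma exp_neg_sq_div_two_eq (t : ℝ) : exp (-t ^ 2 / 2) = exp (-(1 / 2) * t ^ 2) := by
  ring_nf

lemma integrable_exp_neg_sq_div_two : Integrable fun t : ℝ => exp (-t ^ 2 / 2) := by
  simpa only [exp_neg_sq_div_two_eq] using integrable_exp_neg_mul_sq (b := 1 / 2) (by norm_num)

lemma integral_exp_neg_sq_div_two : ∫ t : ℝ, exp (-t ^ 2 / 2) = √(2 * π) := by
  simp only [exp_neg_sq_div_two_eq, integral_gaussian]
  congr 1
  field_simp

lemma hasDerivAt_normCDF (x : ℝ) : HasDerivAt normCDF (normPDF x) x := by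
  have hint := integrable_exp_neg_sq_div_two
  have hsplit : normCDF = fun y => (2 * π) ^ (-(1 : ℝ) / 2) *
      ((∫ t in Set.Iic 0, exp (-t ^ 2 / 2)) + ∫ t in (0 : ℝ)..y, exp (-t ^ 2 / 2)) := by
    ext y
    rw [normCDF, ← intervalIntegral.integral_Iic_sub_Iic hint.integrableOn hint.integrableOn,
      add_sub_cancel]
  have hcont : Continuous fun t : ℝ => exp (-t ^ 2 / 2) := by fun_prop
  rw [hsplit]
  exact ((hcont.integral_hasStrictDerivAt 0 x).hasDerivAt.const_add _).const_mul _

lemma normCDF_le_one (x : ℝ) : normCDF x ≤ 1 := by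
  have hnorm : (2 * π) ^ (-(1 : ℝ) / 2) * √(2 * π) = 1 := by
    rw [sqrt_eq_rpow, ← rpow_add (by positivity)]
    norm_num
  calc normCDF x ≤ (2 * π) ^ (-(1 : ℝ) / 2) * ∫ t : ℝ, exp (-t ^ 2 / 2) := by
        refine mul_le_mul_of_nonneg_left ?_ (by positivity)
        exact setIntegral_le_integral integrable_exp_neg_sq_div_two
          (Filter.Eventually.of_forall fun t => (exp_pos _).le)
    _ = 1 := by rw [integral_exp_neg_sq_div_two, hnorm]

lemma pTildeOne_nonneg (γ θ : ℝ) : 0 ≤ pTildeOne γ θ :=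
  sub_nonneg.mpr (normCDF_le_one _)

lemma pTildeA_nonneg (γ θ : ℝ) : 0 ≤ pTildeA γ θ :=
  sub_nonneg.mpr (normCDF_le_one _)

lemma hasDerivAt_pTildeOne (γ θ : ℝ) :
    HasDerivAt (pTildeOne γ) (-(normPDF ((θ - 1 / 2 - γ) / √γ) / √γ)) θ :=
  (((hasDerivAt_normCDF _).comp θ
    (((hasDerivAt_id' θ).sub_const (1 / 2)).sub_const γ |>.div_const √γ)).const_sub 1).congr_deriv
    (by ring)

lemma hasDerivAt_pTildeA (γ θ : ℝ) :
    HasDerivAt (pTildeA γ) (-(normPDF ((θ + 1 / 2 - γ) / √γ) / √γ)) θ :=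
  (((hasDerivAt_normCDF _).comp θ
    (((hasDerivAt_id' θ).add_const (1 / 2)).sub_const γ |>.div_const √γ)).const_sub 1).congr_deriv
    (by ring)

lemma normPDF_add_half_div_sqrt {γ : ℝ} (hγ : 0 < γ) (θ : ℝ) :
    normPDF ((θ + 1 / 2 - γ) / √γ) = normPDF ((θ - 1 / 2 - γ) / √γ) * exp (-(θ - γ) / γ) := by
  rw [normPDF, normPDF, mul_assoc, ← exp_add, div_pow, div_pow, sq_sqrt hγ.le]
  congr 2
  field_simp
  ring

lemma deriv_div_eq_zero_iff {𝕜 : Type*} [NontriviallyNormedField 𝕜] {f g : 𝕜 → 𝕜} {f' g' x : 𝕜}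
    (hf : HasDerivAt f f' x) (hg : HasDerivAt g g' x) (hx : g x ≠ 0) :
    deriv (fun y => f y / g y) x = 0 ↔ f' * g x = f x * g' := by
  rw [(hf.fun_div hg hx).deriv, div_eq_zero_iff, sub_eq_zero]
  simp [hx]

lemma exp_neg_div_mul_eq_iff {γ A B u : ℝ} (hγ : 0 < γ) (hA : 0 < A) (hB : 0 < B) :
    exp (-u / γ) * A = B ↔ u = γ * log (A / B) := by
  rw [← eq_div_iff hA.ne', ← exp_log (div_pos hB hA), exp_eq_exp, ← inv_div A B, log_inv, neg_div,
    neg_inj, div_eq_iff hγ.ne', mul_comm]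

theorem stmt_13 (γ ρ : ℝ) (hγ : 0 < γ) (hρ : 0 < ρ) :
    ∀ θ : ℝ,
      deriv (fun θ : ℝ =>
          (1 + pTildeOne γ θ * ρ) / ((1 + ρ) * (1 + pTildeA γ θ * ρ))) θ = 0 ↔
        θ = γ * Real.log ((1 + pTildeOne γ θ * ρ) / (1 + pTildeA γ θ * ρ)) + γ := by
  intro θ
  have hA : 0 < 1 + pTildeOne γ θ * ρ := by have := pTildeOne_nonneg γ θ; positivity
  have hB : 0 < 1 + pTildeA γ θ * ρ := by have := pTildeA_nonneg γ θ; positivity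
  rw [deriv_div_eq_zero_iff (((hasDerivAt_pTildeOne γ θ).mul_const ρ).const_add 1)
    ((((hasDerivAt_pTildeA γ θ).mul_const ρ).const_add 1).const_mul (1 + ρ)) (by positivity),
    normPDF_add_half_div_sqrt hγ]
  set A := 1 + pTildeOne γ θ * ρ
  set B := 1 + pTildeA γ θ * ρ
  set φ := normPDF ((θ - 1 / 2 - γ) / √γ)
  have hk : φ * ρ * (1 + ρ) / √γ ≠ 0 := by
    have := normPDF_pos ((θ - 1 / 2 - γ) / √γ)
    positivity
  rw [← sub_eq_iff_eq_add, ← exp_neg_div_mul_eq_iff hγ hA hB]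
  constructor
  · intro h
    exact mul_left_cancel₀ hk (by linear_combination h)
  · intro h
    rw [← h]
    ring
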